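/- arXiv:2211.01499 — 2 statements merged into one kernel-verified Lean document; each statement's English description precedes it below -/
import Mathlib

section
/- Let 𝒴 ⊆ ℂⁿ be a p-dimensional subspace, let t ∈ {p, …, n−1} and i ∈ {1, …, p}, and define 𝒳̃ = span{x_{t−p+i+1}, …, x_t}^⊥ and 𝒴̃ = 𝒳̃ ∩ 𝒴. Then dim 𝒴̃ ≥ i. Moreover, if the smallest Ritz value η_p of A in 𝒴 satisfies η_p > λ_{t+1}, and f : ℝ → ℝ satisfies f(λⱼ) ≠ 0 for every j ∈ {1, …, t−p+i}, then for every i-dimensional subspace 𝒴̃_i ⊆ 𝒴̃ the subspace 𝒴̃'_i = f(A)𝒴̃_i has dimension i. If in addition |f(λ₁)| ≥ ⋯ ≥ |f(λ_{t−p+i})| > ν_t where ν_t = max_{j ∈ {t+1, …, n}} |f(λⱼ)|, and ỹ ∈ 𝒴̃_i is a nonzero vector such that ỹ' = f(A)ỹ is a Ritz vector of A in 𝒴̃'_i associated with the smallest (i-th largest) Ritz value η̃'_i of A in 𝒴̃'_i, and λ_{t−p+i} > η̃'_i, then with w̃ = Σ_{j=1}^{t−p+i} xⱼ(xⱼᴴỹ),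 z̃ = Σ_{j=t+1}^{n} xⱼ(xⱼᴴỹ), and ỹ° = f(λ_{t−p+i}) w̃ + ν_t z̃, one has λ_{t−p+i} > η̃'_i = ρ(ỹ') ≥ ρ(ỹ°) ≥ ρ(ỹ) ≥ η̃_i > λ_{t+1}, where η̃_i is the smallest Ritz value of A in 𝒴̃_i, and (ρ(w̃) − ρ(ỹ°))/(ρ(ỹ°) − ρ(z̃)) = (ν_t²/|f(λ_{t−p+i})|²) · (ρ(w̃) − ρ(ỹ))/(ρ(ỹ) − ρ(z̃)). -/
/-!
In the eigenbasis `x` every Rayleigh quotient is a weighted average of the eigenvalues, with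
weights `|⟪x j, v⟫|²`. A vector `ỹ ∈ 𝒴̃` has no weight on the indices between `t - p + i` and
`t`, so it splits into a head `w̃` (eigenvalues `≥ λ_{t-p+i}`) and a tail `z̃` (eigenvalues
`≤ λ_{t+1}`); since `ρ(ỹ) ≥ η_p > λ_{t+1}`, the head is nonzero, which is also why `f(A)` is
injective on `𝒴̃_i`.

Replacing `ỹ` by `ỹ°` rescales the head weights by `f(λ_{t-p+i})²` and the tail weights by the
smaller `ν_t²`, and replacing `ỹ°` by `f(A)ỹ` rescales each head weight by at least and each
tail weight by at most these factors; moving weight towards the head raises the average as long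
as it stays between `λ_{t+1}` and `λ_{t-p+i}`. The ratio identity is the lever rule:
`(ρ(w̃) - ρ(αw̃ + βz̃)) / (ρ(αw̃ + βz̃) - ρ(z̃)) = β²‖z̃‖² / (α²‖w̃‖²)`.
-/

/-- The Rayleigh quotient `ρ(v) = (vᴴAv)/(vᴴv)` of the Hermitian matrix `A`. -/
noncomputable def rayleigh {n : ℕ} (A : Matrix (Fin n) (Fin n) ℂ)
    (v : EuclideanSpace ℂ (Fin n)) : ℝ :=
  ((inner ℂ v (Matrix.toEuclideanLin A v) : ℂ)).re / ‖v‖ ^ 2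

/-- The `i`-th largest Ritz value (1-indexed, `i ∈ {1, …, dim S}`) of the Hermitian
matrix `A` in the subspace `S`, characterized via the Courant–Fischer max-min
principle applied inside `S` (equivalently, the `i`-th largest eigenvalue of
`SᴴAS` for any orthonormal basis matrix `S`). -/
noncomputable def ritzValue {n : ℕ} (A : Matrix (Fin n) (Fin n) ℂ)
    (S : Submodule ℂ (EuclideanSpace ℂ (Fin n))) (i : ℕ) : ℝ :=
  sSup {r : ℝ | ∃ T : Submodule ℂ (EuclideanSpace ℂ (Fin n)), T ≤ S ∧
    Module.finrank ℂ T = i ∧ ∀ v ∈ T, v ≠ 0 → r ≤ rayleigh A v}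

/-- `f(A) = ∑ j, f(λ_j) x_j x_jᴴ` as a linear operator, for eigenvalues `lam`
and orthonormal eigenvectors `x` of `A`. -/
noncomputable def matFun {n : ℕ} (lam : Fin n → ℝ)
    (x : Fin n → EuclideanSpace ℂ (Fin n)) (f : ℝ → ℝ) :
    EuclideanSpace ℂ (Fin n) →ₗ[ℂ] EuclideanSpace ℂ (Fin n) :=
  ∑ j : Fin n, (f (lam j) : ℂ) • ((innerSL ℂ (x j)).toLinearMap.smulRight (x j))

/-- `y` is a Ritz vector of `A` in `S` associated with the Ritz value `η`:
`y ∈ S`, `y ≠ 0`, `ρ(y) = η` and `Ay − ηy ⊥ S`. -/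
def IsRitzVector {n : ℕ} (A : Matrix (Fin n) (Fin n) ℂ)
    (S : Submodule ℂ (EuclideanSpace ℂ (Fin n))) (η : ℝ)
    (y : EuclideanSpace ℂ (Fin n)) : Prop :=
  y ∈ S ∧ y ≠ 0 ∧ rayleigh A y = η ∧
    ∀ v ∈ S, (inner ℂ v (Matrix.toEuclideanLin A y - (η : ℂ) • y) : ℂ) = 0

open Finset

lemma sum_mul_eq_zero_of_sum_eq_zero {ι : Type*} {s : Finset ι} {μ g : ι → ℝ}
    (hg : ∀ j ∈ s, 0 ≤ g j) (h : ∑ j ∈ s, g j = 0) : ∑ j ∈ s, μ j * g j = 0 := by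
  have hz := (sum_eq_zero_iff_of_nonneg hg).1 h
  exact sum_eq_zero fun j hj => by rw [hz j hj, mul_zero]

lemma div_le_div_of_crossing {ι : Type*} [Fintype ι] {μ g h : ι → ℝ} {r₀ r₁ : ℝ}
    (hh : ∀ j, 0 ≤ h j) (hG : 0 < ∑ j, g j) (hr : r₀ ≤ r₁)
    (hcross : ∀ r ∈ Set.Icc r₀ r₁, ∀ j, (μ j - r) * g j ≤ (μ j - r) * h j)
    (hlow : r₀ < (∑ j, μ j * g j) / ∑ j, g j) (hhigh : (∑ j, μ j * h j) / ∑ j, h j ≤ r₁) :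
    (∑ j, μ j * g j) / ∑ j, g j ≤ (∑ j, μ j * h j) / ∑ j, h j := by
  -- `hcross` at `r = r₀` puts the `h`-average above `r₀`; at `r` = the `h`-average it concludes.
  have key : ∀ r ∈ Set.Icc r₀ r₁,
      ∑ j, μ j * g j - r * ∑ j, g j ≤ ∑ j, μ j * h j - r * ∑ j, h j := by
    intro r hr
    have := sum_le_sum fun j (_ : j ∈ univ) => hcross r hr j
    simpa only [sub_mul, sum_sub_distrib, mul_sum] using this
  have hg₀ : 0 < ∑ j, μ j * g j - r₀ * ∑ j, g j := by
    rw [lt_div_iff₀ hG] at hlow; linarith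
  have hh₀ := lt_of_lt_of_le hg₀ (key r₀ ⟨le_rfl, hr⟩)
  have hH : 0 < ∑ j, h j := by
    refine lt_of_le_of_ne (sum_nonneg fun j _ => hh j) fun hH => ?_
    rw [sum_mul_eq_zero_of_sum_eq_zero (fun j _ => hh j) hH.symm, ← hH] at hh₀
    simp at hh₀
  have hr₀h : r₀ ≤ (∑ j, μ j * h j) / ∑ j, h j := by
    rw [le_div_iff₀ hH]; linarith
  have := key _ ⟨hr₀h, hhigh⟩
  rw [div_mul_cancel₀ _ hH.ne', sub_self] at this
  rw [div_le_iff₀ hG]; linarith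

lemma add_div_add_le_smul_add_div {Nw Nz G H a b : ℝ} (hG : 0 < G) (hH : 0 ≤ H)
    (ha : 0 < a) (hb : 0 ≤ b) (hba : b ≤ a) (hN : Nz * G ≤ Nw * H) :
    (Nw + Nz) / (G + H) ≤ (a * Nw + b * Nz) / (a * G + b * H) := by
  rw [div_le_div_iff₀ (by linarith) (by positivity)]
  nlinarith [mul_nonneg (sub_nonneg.2 hba) (sub_nonneg.2 hN)]

lemma sub_div_sub_weightedMean_eq {Nw Nz G H a b : ℝ} (hG : 0 ≤ G) (hNw : G = 0 → Nw = 0)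
    (hH : 0 ≤ H) (hNz : H = 0 → Nz = 0) (ha : 0 < a) (hb : 0 ≤ b) :
    (Nw / G - (a * Nw + b * Nz) / (a * G + b * H)) /
        ((a * Nw + b * Nz) / (a * G + b * H) - Nz / H) =
      b / a * ((Nw / G - (Nw + Nz) / (G + H)) / ((Nw + Nz) / (G + H) - Nz / H)) := by
  rcases hG.eq_or_lt with rfl | hG
  · rcases hb.eq_or_lt with rfl | hb
    · simp [hNw rfl]
    · simp [hNw rfl, mul_div_mul_left _ _ hb.ne']
  rcases hH.eq_or_lt with rfl | hH
  · simp [hNz rfl, mul_div_mul_left _ _ ha.ne']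
  have hD : 0 < a * G + b * H := by positivity
  have e₁ : Nw / G - (a * Nw + b * Nz) / (a * G + b * H) =
      b * (Nw * H - Nz * G) / (G * (a * G + b * H)) := by
    field_simp; ring
  have e₂ : (a * Nw + b * Nz) / (a * G + b * H) - Nz / H =
      a * (Nw * H - Nz * G) / ((a * G + b * H) * H) := by
    field_simp; ring
  have e₃ : Nw / G - (Nw + Nz) / (G + H) = (Nw * H - Nz * G) / (G * (G + H)) := by
    field_simp; ring
  have e₄ : (Nw + Nz) / (G + H) - Nz / H = (Nw * H - Nz * G) / ((G + H) * H) := by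
    field_simp; ring
  rw [e₁, e₂, e₃, e₄]
  rcases eq_or_ne (Nw * H - Nz * G) 0 with hΔ | hΔ
  · simp [hΔ]
  · field_simp

lemma Orthonormal.sum_inner_smul_self {𝕜 E ι : Type*} [RCLike 𝕜] [NormedAddCommGroup E]
    [InnerProductSpace 𝕜 E] [FiniteDimensional 𝕜 E] [Fintype ι] {v : ι → E}
    (hv : Orthonormal 𝕜 v) (hcard : Fintype.card ι = Module.finrank 𝕜 E) (y : E) :
    ∑ i, inner 𝕜 (v i) y • v i = y := by
  have hsp := (hv.linearIndependent.span_eq_top_of_card_eq_finrank' hcard).ge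
  simpa only [OrthonormalBasis.coe_mk] using (OrthonormalBasis.mk hv hsp).sum_repr' y

lemma exists_abs_rayleigh_le {n : ℕ} (A : Matrix (Fin n) (Fin n) ℂ) :
    ∃ C, ∀ v, |rayleigh A v| ≤ C := by
  set L := LinearMap.toContinuousLinearMap (Matrix.toEuclideanLin A)
  refine ⟨‖L‖, fun v => ?_⟩
  rcases eq_or_ne v 0 with rfl | hv
  · simp [rayleigh]
  rw [rayleigh, abs_div, abs_of_nonneg (sq_nonneg ‖v‖),
    div_le_iff₀ (pow_pos (norm_pos_iff.2 hv) 2)]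
  calc |(inner ℂ v (L v)).re| ≤ ‖inner ℂ v (L v)‖ := Complex.abs_re_le_norm _
    _ ≤ ‖v‖ * ‖L v‖ := norm_inner_le_norm _ _
    _ ≤ ‖v‖ * (‖L‖ * ‖v‖) := by gcongr; exact L.le_opNorm v
    _ = ‖L‖ * ‖v‖ ^ 2 := by ring

section RitzValue

variable {n : ℕ} {A : Matrix (Fin n) (Fin n) ℂ} {S : Submodule ℂ (EuclideanSpace ℂ (Fin n))}
  {k : ℕ}

lemma ritzValue_le_rayleigh (hS : Module.finrank ℂ S = k) {v : EuclideanSpace ℂ (Fin n)}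
    (hv : v ∈ S) (hv0 : v ≠ 0) : ritzValue A S k ≤ rayleigh A v := by
  obtain ⟨C, hC⟩ := exists_abs_rayleigh_le A
  refine csSup_le ⟨-C, S, le_rfl, hS, fun w _ _ => neg_le_of_abs_le (hC w)⟩ ?_
  rintro r ⟨T, hTS, hT, hr⟩
  obtain rfl : T = S := Submodule.eq_of_le_of_finrank_le hTS (by rw [hS, hT])
  exact hr v hv hv0

lemma le_ritzValue (hk : k ≠ 0) {T : Submodule ℂ (EuclideanSpace ℂ (Fin n))} (hTS : T ≤ S)
    (hT : Module.finrank ℂ T = k) {r : ℝ} (hr : ∀ v ∈ T, v ≠ 0 → r ≤ rayleigh A v) :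
    r ≤ ritzValue A S k := by
  obtain ⟨C, hC⟩ := exists_abs_rayleigh_le A
  refine le_csSup ⟨C, ?_⟩ ⟨T, hTS, hT, hr⟩
  rintro r' ⟨T', _, hT', hr'⟩
  have hT'0 : T' ≠ ⊥ := by
    rintro rfl
    simp only [finrank_bot] at hT'
    exact hk hT'.symm
  obtain ⟨w, hw, hw0⟩ := Submodule.exists_mem_ne_zero_of_ne_bot hT'0
  exact (hr' w hw hw0).trans (le_of_abs_le (hC w))

end RitzValue

lemma Submodule.finrank_le_finrank_orthogonal_inf_add {𝕜 E : Type*} [RCLike 𝕜]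
    [NormedAddCommGroup E] [InnerProductSpace 𝕜 E] [FiniteDimensional 𝕜 E]
    (K Y : Submodule 𝕜 E) :
    Module.finrank 𝕜 Y ≤
      Module.finrank 𝕜 (Kᗮ ⊓ Y : Submodule 𝕜 E) + Module.finrank 𝕜 K := by
  have h₁ := Submodule.finrank_sup_add_finrank_inf_eq Kᗮ Y
  have h₂ := K.finrank_add_finrank_orthogonal
  have h₃ := Submodule.finrank_le (Kᗮ ⊔ Y)
  omega

lemma finrank_span_image_le_sub {K V : Type*} [DivisionRing K] [AddCommGroup V] [Module K V]
    {n : ℕ} (x : Fin n → V) (m t : ℕ) :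
    Module.finrank K (Submodule.span K (x '' {j | m ≤ (j : ℕ) ∧ (j : ℕ) < t})) ≤ t - m := by
  classical
  calc _ ≤ (x '' {j | m ≤ (j : ℕ) ∧ (j : ℕ) < t}).toFinset.card := finrank_span_le_card _
    _ ≤ {j : Fin n | m ≤ (j : ℕ) ∧ (j : ℕ) < t}.toFinset.card := by
        rw [Set.toFinset_image]; exact card_image_le
    _ ≤ (Ico m t).card := by
        refine card_le_card_of_injOn Fin.val (fun j hj => ?_) Fin.val_injective.injOn
        simpa using hj
    _ = t - m := Nat.card_Ico m t

noncomputable def spectralPart {n : ℕ} (x : Fin n → EuclideanSpace ℂ (Fin n))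
    (P : Fin n → Prop) [DecidablePred P] (v : EuclideanSpace ℂ (Fin n)) :
    EuclideanSpace ℂ (Fin n) :=
  ∑ j ∈ univ.filter P, inner ℂ (x j) v • x j

section Spectral

variable {n : ℕ} {A : Matrix (Fin n) (Fin n) ℂ} {lam : Fin n → ℝ}
  {x : Fin n → EuclideanSpace ℂ (Fin n)} {m t : ℕ}

lemma norm_sq_sum_smul (hx : Orthonormal ℂ x) (d : Fin n → ℂ) :
    ‖∑ j, d j • x j‖ ^ 2 = ∑ j, ‖d j‖ ^ 2 := by
  rw [← inner_self_eq_norm_sq (𝕜 := ℂ), hx.inner_sum, map_sum]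
  simp [Complex.conj_mul', ← Complex.ofReal_pow]

lemma sum_norm_inner_sq (hx : Orthonormal ℂ x) (v : EuclideanSpace ℂ (Fin n)) :
    ∑ j, ‖inner ℂ (x j) v‖ ^ 2 = ‖v‖ ^ 2 := by
  conv_rhs => rw [← hx.sum_inner_smul_self (by simp) v]
  rw [norm_sq_sum_smul hx]

lemma spectralPart_add_spectralPart_eq_self (hx : Orthonormal ℂ x) (hmt : m ≤ t)
    {v : EuclideanSpace ℂ (Fin n)}
    (hmid : ∀ j : Fin n, m ≤ (j : ℕ) → (j : ℕ) < t → inner ℂ (x j) v = 0) :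
    spectralPart x (fun j : Fin n => (j : ℕ) < m) v +
      spectralPart x (fun j : Fin n => t ≤ (j : ℕ)) v = v := by
  conv_rhs => rw [← hx.sum_inner_smul_self (by simp) v]
  simp only [spectralPart, sum_filter, ← sum_add_distrib]
  refine sum_congr rfl fun j _ => ?_
  by_cases h₁ : (j : ℕ) < m
  · simp [h₁, show ¬t ≤ (j : ℕ) by omega]
  · by_cases h₂ : t ≤ (j : ℕ)
    · simp [h₁, h₂]
    · simp [h₁, h₂, hmid j (by omega) (by omega)]

lemma matFun_apply (f : ℝ → ℝ) (v : EuclideanSpace ℂ (Fin n)) :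
    matFun lam x f v = ∑ j, ((f (lam j) : ℂ) * inner ℂ (x j) v) • x j := by
  simp only [matFun, LinearMap.sum_apply, LinearMap.smul_apply, LinearMap.smulRight_apply,
    smul_smul]
  rfl

lemma inner_matFun_apply (hx : Orthonormal ℂ x) (f : ℝ → ℝ) (v : EuclideanSpace ℂ (Fin n))
    (k : Fin n) : inner ℂ (x k) (matFun lam x f v) = f (lam k) * inner ℂ (x k) v := by
  rw [matFun_apply, hx.inner_right_fintype]

lemma rayleigh_sum_smul (hx : Orthonormal ℂ x)
    (heig : ∀ j, Matrix.toEuclideanLin A (x j) = (lam j : ℂ) • x j) (d : Fin n → ℂ) :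
    rayleigh A (∑ j, d j • x j) = (∑ j, lam j * ‖d j‖ ^ 2) / ∑ j, ‖d j‖ ^ 2 := by
  have hAd : Matrix.toEuclideanLin A (∑ j, d j • x j) = ∑ j, ((lam j : ℂ) * d j) • x j := by
    simp only [map_sum, map_smul, heig, smul_smul, mul_comm]
  rw [rayleigh, hAd, hx.inner_sum, Complex.re_sum, norm_sq_sum_smul hx]
  congr 1
  refine sum_congr rfl fun j _ => ?_
  rw [mul_left_comm, Complex.conj_mul', ← Complex.ofReal_pow, ← Complex.ofReal_mul,
    Complex.ofReal_re]

lemma rayleigh_eq_sum_div (hx : Orthonormal ℂ x)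
    (heig : ∀ j, Matrix.toEuclideanLin A (x j) = (lam j : ℂ) • x j)
    (v : EuclideanSpace ℂ (Fin n)) :
    rayleigh A v = (∑ j, lam j * ‖inner ℂ (x j) v‖ ^ 2) / ∑ j, ‖inner ℂ (x j) v‖ ^ 2 := by
  conv_lhs => rw [← hx.sum_inner_smul_self (by simp) v]
  exact rayleigh_sum_smul hx heig _

lemma rayleigh_matFun (hx : Orthonormal ℂ x)
    (heig : ∀ j, Matrix.toEuclideanLin A (x j) = (lam j : ℂ) • x j) (f : ℝ → ℝ)
    (v : EuclideanSpace ℂ (Fin n)) :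
    rayleigh A (matFun lam x f v) =
      (∑ j, lam j * (f (lam j) ^ 2 * ‖inner ℂ (x j) v‖ ^ 2)) /
        ∑ j, f (lam j) ^ 2 * ‖inner ℂ (x j) v‖ ^ 2 := by
  simp only [matFun_apply, rayleigh_sum_smul hx heig, norm_mul, mul_pow, Complex.norm_real,
    Real.norm_eq_abs, sq_abs]

lemma rayleigh_le_of_inner_eq_zero (hx : Orthonormal ℂ x)
    (heig : ∀ j, Matrix.toEuclideanLin A (x j) = (lam j : ℂ) • x j) (hlam : Antitone lam)
    (htn : t < n) {v : EuclideanSpace ℂ (Fin n)} (hv : v ≠ 0)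
    (hvt : ∀ j : Fin n, (j : ℕ) < t → inner ℂ (x j) v = 0) :
    rayleigh A v ≤ lam ⟨t, htn⟩ := by
  have hpos : 0 < ∑ j, ‖inner ℂ (x j) v‖ ^ 2 := by
    rw [sum_norm_inner_sq hx]; positivity
  rw [rayleigh_eq_sum_div hx heig, div_le_iff₀ hpos, mul_sum]
  refine sum_le_sum fun j _ => ?_
  rcases lt_or_ge (j : ℕ) t with hj | hj
  · simp [hvt j hj]
  · exact mul_le_mul_of_nonneg_right (hlam (Fin.mk_le_of_le_val hj)) (by positivity)

lemma rayleigh_smul_add_smul_spectralPart (hx : Orthonormal ℂ x)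
    (heig : ∀ j, Matrix.toEuclideanLin A (x j) = (lam j : ℂ) • x j)
    (P Q : Fin n → Prop) [DecidablePred P] [DecidablePred Q] (hPQ : ∀ j, P j → ¬ Q j)
    (a b : ℝ) (v : EuclideanSpace ℂ (Fin n)) :
    rayleigh A ((a : ℂ) • spectralPart x P v + (b : ℂ) • spectralPart x Q v) =
      (a ^ 2 * ∑ j ∈ univ.filter P, lam j * ‖inner ℂ (x j) v‖ ^ 2 +
          b ^ 2 * ∑ j ∈ univ.filter Q, lam j * ‖inner ℂ (x j) v‖ ^ 2) /
        (a ^ 2 * ∑ j ∈ univ.filter P, ‖inner ℂ (x j) v‖ ^ 2 +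
          b ^ 2 * ∑ j ∈ univ.filter Q, ‖inner ℂ (x j) v‖ ^ 2) := by
  set d : Fin n → ℂ := fun j => (if P j then (a : ℂ) * inner ℂ (x j) v else 0) +
    (if Q j then (b : ℂ) * inner ℂ (x j) v else 0)
  have hvec : (a : ℂ) • spectralPart x P v + (b : ℂ) • spectralPart x Q v = ∑ j, d j • x j := by
    simp only [spectralPart, d, smul_sum, sum_filter, ← sum_add_distrib, add_smul]
    refine sum_congr rfl fun j _ => ?_
    split_ifs <;> simp [smul_smul]
  have hd : ∀ j, ‖d j‖ ^ 2 = (if P j then a ^ 2 * ‖inner ℂ (x j) v‖ ^ 2 else 0) +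
      (if Q j then b ^ 2 * ‖inner ℂ (x j) v‖ ^ 2 else 0) := by
    intro j
    by_cases hP : P j
    · simp [d, hP, hPQ j hP, mul_pow]
    · by_cases hQ : Q j <;> simp [d, hP, hQ, mul_pow]
  rw [hvec, rayleigh_sum_smul hx heig]
  simp only [hd, mul_add, mul_ite, mul_zero, sum_add_distrib, ← sum_filter, mul_sum,
    mul_left_comm (lam _)]

lemma rayleigh_spectralPart_add_le_smul_add_smul (hx : Orthonormal ℂ x)
    (heig : ∀ j, Matrix.toEuclideanLin A (x j) = (lam j : ℂ) • x j) (hlam : Antitone lam)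
    (hmt : m ≤ t) {v : EuclideanSpace ℂ (Fin n)}
    (hv : ∃ j : Fin n, (j : ℕ) < m ∧ inner ℂ (x j) v ≠ 0) {a b : ℝ} (ha : a ≠ 0)
    (hab : b ^ 2 ≤ a ^ 2) :
    rayleigh A (spectralPart x (fun j : Fin n => (j : ℕ) < m) v +
        spectralPart x (fun j : Fin n => t ≤ (j : ℕ)) v) ≤
      rayleigh A ((a : ℂ) • spectralPart x (fun j : Fin n => (j : ℕ) < m) v +
        (b : ℂ) • spectralPart x (fun j : Fin n => t ≤ (j : ℕ)) v) := by
  have hPQ : ∀ j : Fin n, (j : ℕ) < m → ¬t ≤ (j : ℕ) := fun j h h' => by omega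
  have h₁ := rayleigh_smul_add_smul_spectralPart hx heig _ _ hPQ 1 1 v
  simp only [Complex.ofReal_one, one_smul, one_pow, one_mul] at h₁
  rw [h₁, rayleigh_smul_add_smul_spectralPart hx heig _ _ hPQ]
  obtain ⟨j₀, hj₀, hv₀⟩ := hv
  have hG : 0 < ∑ j ∈ univ.filter (fun j : Fin n => (j : ℕ) < m), ‖inner ℂ (x j) v‖ ^ 2 :=
    lt_of_lt_of_le (by positivity)
      (single_le_sum (fun j _ => sq_nonneg _) (mem_filter.2 ⟨mem_univ j₀, hj₀⟩))
  refine add_div_add_le_smul_add_div hG (sum_nonneg fun j _ => sq_nonneg _) (by positivity)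
    (sq_nonneg b) hab ?_
  simp only [sum_mul_sum]
  rw [sum_comm (s := univ.filter (fun j : Fin n => (j : ℕ) < m))]
  refine sum_le_sum fun i hi => sum_le_sum fun j hj => ?_
  have hji : lam i ≤ lam j :=
    hlam (Fin.le_def.2 (by simp only [mem_filter] at hi hj; omega))
  nlinarith [mul_nonneg (sq_nonneg ‖inner ℂ (x i) v‖) (sq_nonneg ‖inner ℂ (x j) v‖)]

lemma rayleigh_spectralPart_ratio (hx : Orthonormal ℂ x)
    (heig : ∀ j, Matrix.toEuclideanLin A (x j) = (lam j : ℂ) • x j) (hmt : m ≤ t)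
    (v : EuclideanSpace ℂ (Fin n)) {a b : ℝ} (ha : a ≠ 0) :
    let w := spectralPart x (fun j : Fin n => (j : ℕ) < m) v
    let z := spectralPart x (fun j : Fin n => t ≤ (j : ℕ)) v
    (rayleigh A w - rayleigh A ((a : ℂ) • w + (b : ℂ) • z)) /
        (rayleigh A ((a : ℂ) • w + (b : ℂ) • z) - rayleigh A z) =
      b ^ 2 / a ^ 2 *
        ((rayleigh A w - rayleigh A (w + z)) / (rayleigh A (w + z) - rayleigh A z)) := by
  intro w z
  have hPQ : ∀ j : Fin n, (j : ℕ) < m → ¬t ≤ (j : ℕ) := fun j h h' => by omega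
  have hρ := rayleigh_smul_add_smul_spectralPart hx heig _ _ hPQ (v := v)
  set B : Fin n → ℝ := fun j => ‖inner ℂ (x j) v‖ ^ 2
  set G := ∑ j ∈ univ.filter (fun j : Fin n => (j : ℕ) < m), B j
  set H := ∑ j ∈ univ.filter (fun j : Fin n => t ≤ (j : ℕ)), B j
  set Nw := ∑ j ∈ univ.filter (fun j : Fin n => (j : ℕ) < m), lam j * B j
  set Nz := ∑ j ∈ univ.filter (fun j : Fin n => t ≤ (j : ℕ)), lam j * B j
  have eW : rayleigh A w = Nw / G := by simpa using hρ 1 0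
  have eZ : rayleigh A z = Nz / H := by simpa using hρ 0 1
  have eY : rayleigh A (w + z) = (Nw + Nz) / (G + H) := by simpa using hρ 1 1
  rw [eW, eZ, eY, hρ a b]
  have hB : ∀ j, 0 ≤ ‖inner ℂ (x j) v‖ ^ 2 := fun j => sq_nonneg _
  exact sub_div_sub_weightedMean_eq (sum_nonneg fun j _ => hB j)
    (sum_mul_eq_zero_of_sum_eq_zero fun j _ => hB j) (sum_nonneg fun j _ => hB j)
    (sum_mul_eq_zero_of_sum_eq_zero fun j _ => hB j) (by positivity) (sq_nonneg b)

lemma rayleigh_smul_spectralPart_add_le_rayleigh_matFun (hx : Orthonormal ℂ x)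
    (heig : ∀ j, Matrix.toEuclideanLin A (x j) = (lam j : ℂ) • x j) (hmt : m ≤ t)
    {v : EuclideanSpace ℂ (Fin n)}
    (hmid : ∀ j : Fin n, m ≤ (j : ℕ) → (j : ℕ) < t → inner ℂ (x j) v = 0)
    (hv : ∃ j : Fin n, (j : ℕ) < m ∧ inner ℂ (x j) v ≠ 0) {f : ℝ → ℝ} {a b r₀ r₁ : ℝ}
    (ha : a ≠ 0) (hfa : ∀ j : Fin n, (j : ℕ) < m → a ^ 2 ≤ f (lam j) ^ 2)
    (hfb : ∀ j : Fin n, t ≤ (j : ℕ) → f (lam j) ^ 2 ≤ b ^ 2)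
    (hhead : ∀ j : Fin n, (j : ℕ) < m → r₁ ≤ lam j)
    (htail : ∀ j : Fin n, t ≤ (j : ℕ) → lam j ≤ r₀) (hr : r₀ ≤ r₁)
    (hlow : r₀ < rayleigh A ((a : ℂ) • spectralPart x (fun j : Fin n => (j : ℕ) < m) v +
      (b : ℂ) • spectralPart x (fun j : Fin n => t ≤ (j : ℕ)) v))
    (hhigh : rayleigh A (matFun lam x f v) ≤ r₁) :
    rayleigh A ((a : ℂ) • spectralPart x (fun j : Fin n => (j : ℕ) < m) v +
        (b : ℂ) • spectralPart x (fun j : Fin n => t ≤ (j : ℕ)) v) ≤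
      rayleigh A (matFun lam x f v) := by
  have hPQ : ∀ j : Fin n, (j : ℕ) < m → ¬t ≤ (j : ℕ) := fun j h h' => by omega
  set B : Fin n → ℝ := fun j => ‖inner ℂ (x j) v‖ ^ 2
  have hB : ∀ j, 0 ≤ B j := fun j => sq_nonneg _
  set g : Fin n → ℝ := fun j =>
    (if (j : ℕ) < m then a ^ 2 * B j else 0) + (if t ≤ (j : ℕ) then b ^ 2 * B j else 0)
  have hg : rayleigh A ((a : ℂ) • spectralPart x (fun j : Fin n => (j : ℕ) < m) v +
      (b : ℂ) • spectralPart x (fun j : Fin n => t ≤ (j : ℕ)) v) =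
      (∑ j, lam j * g j) / ∑ j, g j := by
    rw [rayleigh_smul_add_smul_spectralPart hx heig _ _ hPQ]
    simp only [g, mul_add, mul_ite, mul_zero, sum_add_distrib, ← sum_filter, mul_sum,
      mul_left_comm (lam _)]
    rfl
  rw [hg] at hlow ⊢
  rw [rayleigh_matFun hx heig] at hhigh ⊢
  obtain ⟨j₀, hj₀, hv₀⟩ := hv
  have hg₀ : ∀ j, 0 ≤ g j := fun j => by
    simp only [g]; split_ifs <;> positivity
  have hG : 0 < ∑ j, g j := by
    refine lt_of_lt_of_le ?_ (single_le_sum (fun j _ => hg₀ j) (mem_univ j₀))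
    simp only [g, hj₀, hPQ j₀ hj₀, if_true, if_false, add_zero]
    exact mul_pos (by positivity) (by positivity)
  refine div_le_div_of_crossing (fun j => by positivity) hG hr (fun r hr j => ?_) hlow hhigh
  by_cases h₁ : (j : ℕ) < m
  · simp only [g, h₁, hPQ j h₁, if_true, if_false, add_zero]
    exact mul_le_mul_of_nonneg_left (mul_le_mul_of_nonneg_right (hfa j h₁) (hB j))
      (sub_nonneg.2 ((hr.2).trans (hhead j h₁)))
  · by_cases h₂ : t ≤ (j : ℕ)
    · simp only [g, h₁, h₂, if_true, if_false, zero_add]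
      exact mul_le_mul_of_nonpos_left (mul_le_mul_of_nonneg_right (hfb j h₂) (hB j))
        (sub_nonpos.2 ((htail j h₂).trans hr.1))
    · simp [g, B, h₁, h₂, hmid j (by omega) (by omega)]

lemma exists_inner_ne_zero_of_lt_rayleigh (hx : Orthonormal ℂ x)
    (heig : ∀ j, Matrix.toEuclideanLin A (x j) = (lam j : ℂ) • x j) (hlam : Antitone lam)
    (htn : t < n) {v : EuclideanSpace ℂ (Fin n)} (hv0 : v ≠ 0)
    (hmid : ∀ j : Fin n, m ≤ (j : ℕ) → (j : ℕ) < t → inner ℂ (x j) v = 0)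
    (hv : lam ⟨t, htn⟩ < rayleigh A v) : ∃ j : Fin n, (j : ℕ) < m ∧ inner ℂ (x j) v ≠ 0 := by
  by_contra! h
  refine hv.not_ge (rayleigh_le_of_inner_eq_zero hx heig hlam htn hv0 fun j hj => ?_)
  rcases lt_or_ge (j : ℕ) m with hjm | hjm
  · exact h j hjm
  · exact hmid j hjm hj

lemma finrank_map_matFun_eq (hx : Orthonormal ℂ x)
    (heig : ∀ j, Matrix.toEuclideanLin A (x j) = (lam j : ℂ) • x j) (hlam : Antitone lam)
    (htn : t < n) {f : ℝ → ℝ} (hf : ∀ j : Fin n, (j : ℕ) < m → f (lam j) ≠ 0)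
    {S : Submodule ℂ (EuclideanSpace ℂ (Fin n))}
    (hmid : ∀ v ∈ S, ∀ j : Fin n, m ≤ (j : ℕ) → (j : ℕ) < t → inner ℂ (x j) v = 0)
    (hS : ∀ v ∈ S, v ≠ 0 → lam ⟨t, htn⟩ < rayleigh A v) :
    Module.finrank ℂ (S.map (matFun lam x f)) = Module.finrank ℂ S := by
  have hinj : Function.Injective ((matFun lam x f).domRestrict S) := by
    rw [← LinearMap.ker_eq_bot, LinearMap.ker_eq_bot']
    rintro ⟨v, hv⟩ hFv
    by_contra hv0
    have hv0' : v ≠ 0 := fun h => hv0 (Subtype.ext h)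
    obtain ⟨j, hjm, hj⟩ :=
      exists_inner_ne_zero_of_lt_rayleigh hx heig hlam htn hv0' (hmid v hv) (hS v hv hv0')
    have hc := inner_matFun_apply (lam := lam) hx f v j
    rw [LinearMap.domRestrict_apply] at hFv
    rw [hFv, inner_zero_right] at hc
    exact mul_ne_zero (by exact_mod_cast hf j hjm) hj hc.symm
  rw [← LinearMap.range_domRestrict, LinearMap.finrank_range_of_inj hinj]

end Spectral

/-- (Lemma 3.3.) For `𝒳̃ = span{x_{t−p+i+1},…,x_t}^⊥` and
`𝒴̃ = 𝒳̃ ∩ 𝒴`, one has `dim 𝒴̃ ≥ i`.  If `η_p > λ_{t+1}` and `f(λ_j) ≠ 0` for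
`j ≤ t−p+i`, then `𝒴̃'_i = f(A)𝒴̃_i` has dimension `i` for every `i`-dimensional
`𝒴̃_i ⊆ 𝒴̃`; if in addition `|f(λ₁)| ≥ ⋯ ≥ |f(λ_{t−p+i})| > ν_t` and
`ỹ' = f(A)ỹ` is a Ritz vector for the smallest Ritz value `η̃'_i` of `𝒴̃'_i` with
`λ_{t−p+i} > η̃'_i`, then, with `ỹ° = f(λ_{t−p+i})w̃ + ν_t z̃`, one has
`λ_{t−p+i} > η̃'_i = ρ(ỹ') ≥ ρ(ỹ°) ≥ ρ(ỹ) ≥ η̃_i > λ_{t+1}` and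
`(ρ(w̃) − ρ(ỹ°))/(ρ(ỹ°) − ρ(z̃)) = (ν_t²/|f(λ_{t−p+i})|²)·(ρ(w̃) − ρ(ỹ))/(ρ(ỹ) − ρ(z̃))`.
(0-indexed: `lam ⟨j⟩` is `λ_{j+1}`.) -/
theorem stmt12 {n p i t : ℕ} (hi : 1 ≤ i) (hip : i ≤ p)
    (hpt : p ≤ t) (htn : t < n)
    (A : Matrix (Fin n) (Fin n) ℂ)
    (lam : Fin n → ℝ) (hlam : Antitone lam)
    (x : Fin n → EuclideanSpace ℂ (Fin n)) (hx : Orthonormal ℂ x)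
    (heig : ∀ j, Matrix.toEuclideanLin A (x j) = (lam j : ℂ) • x j)
    (Y : Submodule ℂ (EuclideanSpace ℂ (Fin n))) (hY : Module.finrank ℂ Y = p)
    (f : ℝ → ℝ)
    (Yt : Submodule ℂ (EuclideanSpace ℂ (Fin n)))
    (hYt : Yt = (Submodule.span ℂ
      (x '' {j | t - p + i ≤ (j : ℕ) ∧ (j : ℕ) < t}))ᗮ ⊓ Y) :
    i ≤ Module.finrank ℂ Yt ∧
    (lam ⟨t, htn⟩ < ritzValue A Y p →
      (∀ j : Fin n, (j : ℕ) < t - p + i → f (lam j) ≠ 0) →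
      ∀ Yi : Submodule ℂ (EuclideanSpace ℂ (Fin n)), Yi ≤ Yt →
        Module.finrank ℂ Yi = i →
        Module.finrank ℂ (Yi.map (matFun lam x f)) = i ∧
        (∀ νt : ℝ,
          IsGreatest ((fun j => |f (lam j)|) '' {j : Fin n | t ≤ (j : ℕ)}) νt →
          (∀ j k : Fin n, (j : ℕ) ≤ (k : ℕ) → (k : ℕ) < t - p + i →
            |f (lam k)| ≤ |f (lam j)|) →
          νt < |f (lam ⟨t - p + i - 1, by omega⟩)| →
          ∀ yt : EuclideanSpace ℂ (Fin n), yt ∈ Yi → yt ≠ 0 →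
          IsRitzVector A (Yi.map (matFun lam x f))
            (ritzValue A (Yi.map (matFun lam x f)) i) (matFun lam x f yt) →
          ritzValue A (Yi.map (matFun lam x f)) i < lam ⟨t - p + i - 1, by omega⟩ →
          ∀ wt zt yto : EuclideanSpace ℂ (Fin n),
          wt = (∑ j ∈ Finset.univ.filter (fun j : Fin n => (j : ℕ) < t - p + i),
            (inner ℂ (x j) yt : ℂ) • x j) →
          zt = (∑ j ∈ Finset.univ.filter (fun j : Fin n => t ≤ (j : ℕ)),
            (inner ℂ (x j) yt : ℂ) • x j) →
          yto = (f (lam ⟨t - p + i - 1, by omega⟩) : ℂ) • wt + (νt : ℂ) • zt →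
          (ritzValue A (Yi.map (matFun lam x f)) i < lam ⟨t - p + i - 1, by omega⟩ ∧
            ritzValue A (Yi.map (matFun lam x f)) i = rayleigh A (matFun lam x f yt) ∧
            rayleigh A yto ≤ rayleigh A (matFun lam x f yt) ∧
            rayleigh A yt ≤ rayleigh A yto ∧
            ritzValue A Yi i ≤ rayleigh A yt ∧
            lam ⟨t, htn⟩ < ritzValue A Yi i) ∧
          (rayleigh A wt - rayleigh A yto) / (rayleigh A yto - rayleigh A zt) =
            νt ^ 2 / |f (lam ⟨t - p + i - 1, by omega⟩)| ^ 2 *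
              ((rayleigh A wt - rayleigh A yt) /
                (rayleigh A yt - rayleigh A zt)))) := by
  subst hYt
  have hmt : t - p + i ≤ t := by omega
  set K := Submodule.span ℂ (x '' {j | t - p + i ≤ (j : ℕ) ∧ (j : ℕ) < t})
  refine ⟨?_, fun hη hf Yi hYiYt hYi => ?_⟩
  · have h₁ := Submodule.finrank_le_finrank_orthogonal_inf_add K Y
    have h₂ : Module.finrank ℂ K ≤ t - (t - p + i) := finrank_span_image_le_sub x _ _
    omega
  have hY' : ∀ v ∈ Yi, v ∈ Y := fun v hv => (hYiYt hv).2
  have hmid : ∀ v ∈ Yi, ∀ j : Fin n, t - p + i ≤ (j : ℕ) → (j : ℕ) < t →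
      inner ℂ (x j) v = 0 := fun v hv j h₁ h₂ =>
    K.inner_right_of_mem_orthogonal (Submodule.subset_span ⟨j, ⟨h₁, h₂⟩, rfl⟩) (hYiYt hv).1
  have hρ : ∀ v ∈ Yi, v ≠ 0 → lam ⟨t, htn⟩ < rayleigh A v := fun v hv hv0 =>
    hη.trans_le (ritzValue_le_rayleigh hY (hY' v hv) hv0)
  refine ⟨(finrank_map_matFun_eq hx heig hlam htn hf hmid hρ).trans hYi,
    fun νt hνt hmono hν yt hyt hyt0 hritz hlt wt zt yto hw hz hyo => ?_⟩
  change wt = spectralPart x (fun j : Fin n => (j : ℕ) < t - p + i) yt at hw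
  change zt = spectralPart x (fun j : Fin n => t ≤ (j : ℕ)) yt at hz
  subst hw hz hyo
  set k : Fin n := ⟨t - p + i - 1, by omega⟩
  have hν0 : 0 ≤ νt := by
    obtain ⟨j, -, hj⟩ := hνt.1
    exact hj ▸ abs_nonneg _
  have hfk : f (lam k) ≠ 0 := abs_pos.1 (hν0.trans_lt hν)
  have hhead := exists_inner_ne_zero_of_lt_rayleigh hx heig hlam htn hyt0 (hmid yt hyt)
    (hρ yt hyt hyt0)
  have hsplit := spectralPart_add_spectralPart_eq_self hx hmt (hmid yt hyt)
  have hup := rayleigh_spectralPart_add_le_smul_add_smul hx heig hlam hmt hhead hfk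
    (sq_le_sq.2 ((abs_of_nonneg hν0).trans_le hν.le))
  rw [hsplit] at hup
  have hF := rayleigh_smul_spectralPart_add_le_rayleigh_matFun hx heig hmt (hmid yt hyt) hhead hfk
    (fun j hj => sq_le_sq.2 (hmono j k (by simp [k]; omega) (by simp [k]; omega)))
    (fun j hj => sq_le_sq.2 ((hνt.2 ⟨j, hj, rfl⟩).trans (le_abs_self νt)))
    (fun j hj => hlam (Fin.le_def.2 (by simp [k]; omega)))
    (fun j hj => hlam (Fin.le_def.2 hj)) (hlam (Fin.le_def.2 (by simp [k]; omega)))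
    ((hρ yt hyt hyt0).trans_le hup) (hritz.2.2.1 ▸ hlt.le)
  have hratio := rayleigh_spectralPart_ratio hx heig hmt yt (b := νt) hfk
  dsimp only at hratio
  rw [hsplit, ← sq_abs (f (lam k))] at hratio
  refine ⟨⟨hlt, hritz.2.2.1.symm, hF, hup, ritzValue_le_rayleigh hYi hyt hyt0, ?_⟩, hratio⟩
  exact hη.trans_le (le_ritzValue (by omega) le_rfl hYi fun v hv hv0 =>
    ritzValue_le_rayleigh hY (hY' v hv) hv0)
end

section
/- Let à ∈ ℂ^{n×n} be a Hermitian positive definite matrix and let y ∈ ℂⁿ be nonzero. Then ρ̃(y) ≤ ρ̃(Ãy), where ρ̃ denotes the Rayleigh quotient of Ã, and equality holds if and only if y is an eigenvector of Ã. -/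
open RCLike

namespace ContinuousLinearMap

variable {𝕜 E : Type*} [RCLike 𝕜] [NormedAddCommGroup E] [InnerProductSpace 𝕜 E]
  {T : E →L[𝕜] E}

theorem IsPositive.norm_inner_sq_le (hT : T.IsPositive) (x y : E) :
    ‖inner 𝕜 (T x) y‖ ^ 2 ≤ T.reApplyInnerSelf x * T.reApplyInnerSelf y := by
  let core : PreInnerProductSpace.Core 𝕜 E :=
    { inner := fun x y => inner 𝕜 (T x) y
      conj_inner_symm := fun x y => by rw [inner_conj_symm, hT.inner_left_eq_inner_right]
      re_inner_nonneg := hT.re_inner_nonneg_left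
      add_left := fun x y z => by simp [inner_add_left]
      smul_left := fun x y r => by simp [inner_smul_left] }
  have h : ‖inner 𝕜 (T x) y‖ * ‖inner 𝕜 (T y) x‖ ≤
      re (inner 𝕜 (T x) x) * re (inner 𝕜 (T y) y) :=
    @InnerProductSpace.Core.inner_mul_inner_self_le 𝕜 E _ _ _ core x y
  rwa [hT.inner_left_eq_inner_right y, norm_inner_symm y, ← sq] at h

theorem IsPositive.norm_apply_sq_sq_le (hT : T.IsPositive) (y : E) :
    (‖T y‖ ^ 2) ^ 2 ≤ T.reApplyInnerSelf y * T.reApplyInnerSelf (T y) := by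
  simpa [inner_self_eq_norm_sq_to_K] using hT.norm_inner_sq_le y (T y)

theorem IsPositive.apply_eq_zero_of_reApplyInnerSelf_eq_zero (hT : T.IsPositive) {y : E}
    (hy : T.reApplyInnerSelf y = 0) : T y = 0 := by
  have h := hT.norm_apply_sq_sq_le y
  rw [hy, zero_mul] at h
  simpa using h

theorem IsPositive.rayleighQuotient_nonneg (hT : T.IsPositive) (y : E) :
    0 ≤ T.rayleighQuotient y :=
  div_nonneg (hT.re_inner_nonneg_left y) (sq_nonneg _)

theorem rayleighQuotient_le_norm_apply_sq_div (T : E →L[𝕜] E) {y : E}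
    (hy : 0 < T.reApplyInnerSelf y) :
    T.rayleighQuotient y ≤ ‖T y‖ ^ 2 / T.reApplyInnerSelf y := by
  have hy0 : 0 < ‖y‖ := norm_pos_iff.2 (by rintro rfl; simp [reApplyInnerSelf_apply] at hy)
  have hCS : T.reApplyInnerSelf y ≤ ‖T y‖ * ‖y‖ := re_inner_le_norm _ _
  rw [rayleighQuotient, div_le_div_iff₀ (by positivity) hy]
  nlinarith

theorem IsPositive.norm_apply_sq_div_le_rayleighQuotient_apply (hT : T.IsPositive) {y : E}
    (hy : 0 < T.reApplyInnerSelf y) :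
    ‖T y‖ ^ 2 / T.reApplyInnerSelf y ≤ T.rayleighQuotient (T y) := by
  have hTy : 0 < ‖T y‖ := norm_pos_iff.2 fun h ↦ by simp [reApplyInnerSelf_apply, h] at hy
  rw [div_le_div_iff₀ hy (by positivity)]
  nlinarith [hT.norm_apply_sq_sq_le y]

theorem exists_apply_eq_smul_of_rayleighQuotient_eq_norm_apply_sq_div (T : E →L[𝕜] E) {y : E}
    (hy : 0 < T.reApplyInnerSelf y)
    (h : T.rayleighQuotient y = ‖T y‖ ^ 2 / T.reApplyInnerSelf y) : ∃ μ : 𝕜, T y = μ • y := by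
  have hy0 : y ≠ 0 := by rintro rfl; simp [reApplyInnerSelf_apply] at hy
  have hTy0 : T y ≠ 0 := fun h ↦ by simp [reApplyInnerSelf_apply, h] at hy
  have hsq : T.reApplyInnerSelf y ^ 2 = (‖T y‖ * ‖y‖) ^ 2 := by
    rw [rayleighQuotient, div_eq_div_iff (by positivity) hy.ne'] at h
    linear_combination h
  have heq : T.reApplyInnerSelf y = ‖T y‖ * ‖y‖ :=
    (pow_left_inj₀ hy.le (by positivity) two_ne_zero).1 hsq
  have hnorm : ‖inner 𝕜 y (T y)‖ = ‖y‖ * ‖T y‖ := by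
    refine le_antisymm (norm_inner_le_norm _ _) ?_
    calc ‖y‖ * ‖T y‖ = T.reApplyInnerSelf y := by rw [heq, mul_comm]
      _ ≤ ‖inner 𝕜 (T y) y‖ := re_le_norm _
      _ = ‖inner 𝕜 y (T y)‖ := norm_inner_symm _ _
  obtain ⟨μ, -, hμ⟩ := (norm_inner_eq_norm_iff hy0 hTy0).1 hnorm
  exact ⟨μ, hμ⟩

theorem IsPositive.rayleighQuotient_le_rayleighQuotient_apply (hT : T.IsPositive) (y : E) :
    T.rayleighQuotient y ≤ T.rayleighQuotient (T y) := by
  rcases (hT.re_inner_nonneg_left y).eq_or_lt with hy | hy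
  · rw [rayleighQuotient, reApplyInnerSelf_apply, ← hy, zero_div]
    exact hT.rayleighQuotient_nonneg _
  · exact (T.rayleighQuotient_le_norm_apply_sq_div hy).trans
      (hT.norm_apply_sq_div_le_rayleighQuotient_apply hy)

theorem IsPositive.rayleighQuotient_eq_rayleighQuotient_apply_iff (hT : T.IsPositive) (y : E) :
    T.rayleighQuotient y = T.rayleighQuotient (T y) ↔ ∃ μ : 𝕜, T y = μ • y := by
  constructor
  · intro h
    rcases (hT.re_inner_nonneg_left y).eq_or_lt with hy | hy
    · exact ⟨0, by rw [zero_smul]; exact hT.apply_eq_zero_of_reApplyInnerSelf_eq_zero hy.symm⟩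
    · exact T.exists_apply_eq_smul_of_rayleighQuotient_eq_norm_apply_sq_div hy <| le_antisymm
        (T.rayleighQuotient_le_norm_apply_sq_div hy)
        ((hT.norm_apply_sq_div_le_rayleighQuotient_apply hy).trans h.ge)
  · rintro ⟨μ, hμ⟩
    rcases eq_or_ne μ 0 with rfl | hμ0
    · simp [reApplyInnerSelf_apply, hμ]
    · rw [hμ, T.rayleigh_smul y hμ0]

end ContinuousLinearMap

theorem rayleigh_eq_rayleighQuotient {n : ℕ} (A : Matrix (Fin n) (Fin n) ℂ)
    (v : EuclideanSpace ℂ (Fin n)) :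
    rayleigh A v = (Matrix.toEuclideanLin A).toContinuousLinearMap.rayleighQuotient v := by
  rw [rayleigh, ContinuousLinearMap.rayleighQuotient, ContinuousLinearMap.reApplyInnerSelf_apply,
    inner_re_symm]
  rfl

open scoped ComplexOrder

theorem stmt19_general {n : ℕ}
    (A : Matrix (Fin n) (Fin n) ℂ) (hA : A.PosDef)
    (y : EuclideanSpace ℂ (Fin n)) :
    rayleigh A y ≤ rayleigh A (Matrix.toEuclideanLin A y) ∧
    (rayleigh A y = rayleigh A (Matrix.toEuclideanLin A y) ↔
      ∃ μ : ℂ, Matrix.toEuclideanLin A y = μ • y) := by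
  have hT : (Matrix.toEuclideanLin A).toContinuousLinearMap.IsPositive :=
    Matrix.isPositive_toEuclideanLin_iff.2 hA.posSemidef
  simp only [rayleigh_eq_rayleighQuotient]
  exact ⟨hT.rayleighQuotient_le_rayleighQuotient_apply y,
    hT.rayleighQuotient_eq_rayleighQuotient_apply_iff y⟩

/-- For a Hermitian positive definite matrix `Ã` and a nonzero
vector `y`, the Rayleigh quotient satisfies `ρ̃(y) ≤ ρ̃(Ãy)`, with equality if and
only if `y` is an eigenvector of `Ã`. -/
theorem stmt19 {n : ℕ}
    (A : Matrix (Fin n) (Fin n) ℂ) (hA : A.PosDef)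
    (y : EuclideanSpace ℂ (Fin n)) (hy : y ≠ 0) :
    rayleigh A y ≤ rayleigh A (Matrix.toEuclideanLin A y) ∧
    (rayleigh A y = rayleigh A (Matrix.toEuclideanLin A y) ↔
      ∃ μ : ℂ, Matrix.toEuclideanLin A y = μ • y) :=
  stmt19_general A hA y
end
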